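/- The dihedral invariants u_i := a_1^{t-i} a_i + a_δ^{t-i} a_{t-i} (for 1 ≤ i ≤ δ = t-1) of a tuple (a_1,…,a_{t-1}) over a field k satisfy: the tuple of dihedral invariants is zero if and only if a_1 = a_δ = 0, provided the characteristic of k is zero. -/
import Mathlib


/-- The dihedral invariants `u_i = a_1^{t-i} a_i + a_δ^{t-i} a_{t-i}` (with `δ = t-1`)
all vanish iff `a_1 = a_δ = 0`, over a field of characteristic zero. -/
theorem dihedral_invariants_eq_zero_iff (k : Type*) [Field k] [CharZero k]
    (t : ℕ) (ht : 2 ≤ t) (a : ℕ → k) :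
    (∀ i, 1 ≤ i → i ≤ t - 1 →
      a 1 ^ (t - i) * a i + a (t - 1) ^ (t - i) * a (t - i) = 0)
    ↔ (a 1 = 0 ∧ a (t - 1) = 0) := by
  constructor
  · intro h
    have h1 := h 1 le_rfl (by omega)
    have hd := h (t - 1) (by omega) le_rfl
    have e1 : t - (t - 1) = 1 := by omega
    rw [e1] at hd
    have e2 : t - 1 - 0 = t - 1 := by omega
    -- hd : a 1 ^ 1 * a (t-1) + a (t-1) ^ 1 * a 1 = 0
    have hprod : a 1 * a (t - 1) = 0 := by
      have : (2 : k) * (a 1 * a (t - 1)) = 0 := by ring_nf; ring_nf at hd; linear_combination hd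
      have h2 : (2 : k) ≠ 0 := two_ne_zero
      exact (mul_eq_zero.mp this).resolve_left h2
    -- h1 : a 1 ^ (t-1) * a 1 + a (t-1) ^ (t-1) * a (t-1) = 0
    rcases mul_eq_zero.mp hprod with h0 | h0
    · refine ⟨h0, ?_⟩
      rw [h0] at h1
      have ht1 : 1 ≤ t - 1 := by omega
      have : a (t - 1) ^ (t - 1) * a (t - 1) = 0 := by
        simpa [zero_pow (by omega : t - 1 ≠ 0)] using h1
      have : a (t - 1) ^ t = 0 := by
        rw [show t = (t - 1) + 1 by omega, pow_succ]; exact ‹a (t - 1) ^ (t - 1) * a (t - 1) = 0›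
      exact pow_eq_zero_iff (by omega : t ≠ 0) |>.mp this
    · refine ⟨?_, h0⟩
      rw [h0] at h1
      have : a 1 ^ (t - 1) * a 1 = 0 := by
        simpa [zero_pow (by omega : t - 1 ≠ 0)] using h1
      have : a 1 ^ t = 0 := by
        rw [show t = (t - 1) + 1 by omega, pow_succ]; exact this
      exact pow_eq_zero_iff (by omega : t ≠ 0) |>.mp this
  · rintro ⟨h1, hd⟩ i hi1 hi2
    rw [h1, hd, zero_pow (by omega : t - i ≠ 0)]
    ring
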